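/- arXiv:2002.11978 — 6 statements merged into one kernel-verified Lean document; each statement's English description precedes it below -/
import Mathlib

section
/- The discretized fractional Laplacian matrix A is strictly diagonally dominant: for every row i, a_{ii} − Σ_{j≠i} |a_{ij}| > 0. In particular, for the first row, a_{11} − Σ_{j≥2} |a_{1j}| > C[(2^ν + κ_μ − 1)/2 + (N^ν − (N−1)^ν)/N^μ + 2ν/(αN^α)] > 0. -/
/-!
The absolute off-diagonal entries of `A` at offset `k` are `C (2^ν + κ_μ - 1) / 2` for `k = 1`
and `C w_k / 2` for `k ≥ 2`, where `w_ℓ = ((ℓ+1)^ν - (ℓ-1)^ν) / ℓ^μ > 0` are the summands of the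
first sum in `a_ii`. Since `A` is symmetric Toeplitz, a row meets each offset `1 ≤ k ≤ N-2` at
most twice, and the first row exactly once. Summing over these offsets gives strictly less
than half of `C (2^ν + κ_μ - 1 + Σ_{ℓ=2}^{N-1} w_ℓ)`, because the offset `N-1` is missing.
Hence every row keeps a margin of at least `C ((N^ν - (N-1)^ν)/N^μ + 2ν/(αN^α)) > 0`, and the
first row, which uses only half of the budget, even keeps `C (2^ν + κ_μ - 1) / 2` on top.
-/

open Finset

/-- First-row entries (by offset `k = |i-j|`) of the finite difference discretization
of the 1D integral fractional Laplacian. -/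
noncomputable def flEntry (α μ ν κμ C : ℝ) (N : ℕ) : ℕ → ℝ := fun k =>
  if k = 0 then
    C * ((∑ ℓ ∈ Finset.Icc 2 (N - 1), (((ℓ : ℝ) + 1) ^ ν - ((ℓ : ℝ) - 1) ^ ν) / (ℓ : ℝ) ^ μ)
      + ((N : ℝ) ^ ν - ((N : ℝ) - 1) ^ ν) / (N : ℝ) ^ μ
      + ((2 : ℝ) ^ ν + κμ - 1) + 2 * ν / (α * (N : ℝ) ^ α))
  else if k = 1 then -(C * ((2 : ℝ) ^ ν + κμ - 1) / 2)
  else -(C * (((k : ℝ) + 1) ^ ν - ((k : ℝ) - 1) ^ ν) / (2 * (k : ℝ) ^ μ))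

/-- The `(N-1)×(N-1)` symmetric Toeplitz matrix of the discretized fractional Laplacian. -/
noncomputable def flMatrix (α μ ν κμ C : ℝ) (N : ℕ) :
    Matrix (Fin (N - 1)) (Fin (N - 1)) ℝ :=
  fun i j => flEntry α μ ν κμ C N (((i.val : ℤ) - (j.val : ℤ)).natAbs)

section SymmToeplitz

variable {R : Type*} {n : ℕ}

def symmToeplitz (n : ℕ) (f : ℕ → R) : Matrix (Fin n) (Fin n) R :=
  Matrix.of fun i j => f ((i : ℤ) - j).natAbs

variable (f : ℕ → R)

theorem symmToeplitz_apply (i j : Fin n) : symmToeplitz n f i j = f ((i : ℤ) - j).natAbs := rfl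

theorem symmToeplitz_apply_self (i : Fin n) : symmToeplitz n f i i = f 0 := by
  simp [symmToeplitz_apply]

theorem sum_abs_offDiag_symmToeplitz_of_val_eq_zero [AddCommGroup R] [Lattice R] (i : Fin n)
    (hi : (i : ℕ) = 0) :
    ∑ j ∈ univ.filter (· ≠ i), |symmToeplitz n f i j| = ∑ k ∈ Ico 1 n, |f k| := by
  refine sum_nbij (fun j => (j : ℕ)) (fun j hj => ?_) Fin.val_injective.injOn
    (fun k hk => ?_) (fun j _ => by simp [symmToeplitz_apply, hi])
  · have hji : (j : ℕ) ≠ i := Fin.val_ne_of_ne (mem_filter.mp hj).2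
    simp only [mem_Ico]
    omega
  · have hk := mem_Ico.mp hk
    refine ⟨⟨k, hk.2⟩, ?_, rfl⟩
    simp only [mem_coe, mem_filter, mem_univ, true_and, ne_eq, Fin.ext_iff]
    omega

/-- Every distance `k ≥ 1` from `i` is attained by at most two indices, `i - k` and `i + k`. -/
theorem sum_abs_offDiag_symmToeplitz_le [Ring R] [LinearOrder R] [IsStrictOrderedRing R]
    (i : Fin n) :
    ∑ j ∈ univ.filter (· ≠ i), |symmToeplitz n f i j| ≤ 2 * ∑ k ∈ Ico 1 n, |f k| := by
  have hmaps : ∀ j ∈ univ.filter (· ≠ i), ((i : ℤ) - j).natAbs ∈ Ico 1 n := by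
    intro j hj
    have hji : (j : ℕ) ≠ i := Fin.val_ne_of_ne (mem_filter.mp hj).2
    simp only [mem_Ico]
    omega
  rw [← sum_fiberwise_of_maps_to hmaps, mul_sum]
  gcongr with k
  set fiber := (univ.filter (· ≠ i)).filter (fun j : Fin n => ((i : ℤ) - j).natAbs = k)
  have hcard : #fiber ≤ 2 := by
    have hsub : Set.MapsTo (fun j : Fin n => (j : ℕ)) fiber
        ({(i : ℕ) + k, (i : ℕ) - k} : Finset ℕ) := by
      intro j hj
      simp only [fiber, mem_coe, mem_filter, mem_univ, true_and] at hj
      simp only [coe_insert, coe_singleton, Set.mem_insert_iff, Set.mem_singleton_iff]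
      omega
    exact (card_le_card_of_injOn _ hsub Fin.val_injective.injOn).trans card_le_two
  calc ∑ j ∈ fiber, |symmToeplitz n f i j|
      = ∑ j ∈ fiber, |f k| :=
        sum_congr rfl fun j hj => by rw [symmToeplitz_apply, (mem_filter.mp hj).2]
    _ = #fiber * |f k| := by rw [sum_const, nsmul_eq_mul]
    _ ≤ 2 * |f k| := by gcongr; exact_mod_cast hcard

end SymmToeplitz

section FractionalLaplacian

variable {α μ ν κμ C : ℝ} {N : ℕ}

noncomputable def flWeight (μ ν : ℝ) (ℓ : ℕ) : ℝ :=
  (((ℓ : ℝ) + 1) ^ ν - ((ℓ : ℝ) - 1) ^ ν) / (ℓ : ℝ) ^ μ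

theorem flWeight_pos (hν : 0 < ν) {ℓ : ℕ} (hℓ : 1 ≤ ℓ) : 0 < flWeight μ ν ℓ := by
  have hℓ' : (1 : ℝ) ≤ ℓ := by exact_mod_cast hℓ
  unfold flWeight
  have := Real.rpow_lt_rpow (by linarith) (by linarith : (ℓ : ℝ) - 1 < ℓ + 1) hν
  exact div_pos (by linarith) (by positivity)

theorem flEntry_zero : flEntry α μ ν κμ C N 0 =
    C * (∑ ℓ ∈ Icc 2 (N - 1), flWeight μ ν ℓ + ((N : ℝ) ^ ν - ((N : ℝ) - 1) ^ ν) / (N : ℝ) ^ μ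
      + ((2 : ℝ) ^ ν + κμ - 1) + 2 * ν / (α * (N : ℝ) ^ α)) := by
  simp [flEntry, flWeight]

theorem abs_flEntry_one (hC : 0 ≤ C) (hB : 0 ≤ (2 : ℝ) ^ ν + κμ - 1) :
    |flEntry α μ ν κμ C N 1| = C * ((2 : ℝ) ^ ν + κμ - 1) / 2 := by
  simp only [flEntry, one_ne_zero, if_false, if_true, abs_neg]
  exact abs_of_nonneg (by positivity)

theorem abs_flEntry_of_two_le (hC : 0 ≤ C) (hν : 0 < ν) {k : ℕ} (hk : 2 ≤ k) :
    |flEntry α μ ν κμ C N k| = C * flWeight μ ν k / 2 := by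
  have hw := flWeight_pos (μ := μ) hν (by omega : 1 ≤ k)
  have hentry : flEntry α μ ν κμ C N k = -(C * flWeight μ ν k / 2) := by
    rw [flEntry, if_neg (by omega), if_neg (by omega), flWeight]
    ring
  rw [hentry, abs_neg, abs_of_nonneg (by positivity)]

theorem sum_abs_flEntry_lt (hC : 0 < C) (hν : 0 < ν) (hB : 0 < (2 : ℝ) ^ ν + κμ - 1)
    (hN : 2 ≤ N) :
    ∑ k ∈ Ico 1 (N - 1), |flEntry α μ ν κμ C N k|
      < C * ((2 : ℝ) ^ ν + κμ - 1 + ∑ ℓ ∈ Icc 2 (N - 1), flWeight μ ν ℓ) / 2 := by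
  obtain ⟨m, rfl⟩ : ∃ m, N = m + 2 := ⟨N - 2, by omega⟩
  have hN1 : m + 2 - 1 = m + 1 := rfl
  have hfull : ∑ k ∈ Ico 1 (m + 2), |flEntry α μ ν κμ C (m + 2) k|
      = C * ((2 : ℝ) ^ ν + κμ - 1 + ∑ ℓ ∈ Icc 2 (m + 1), flWeight μ ν ℓ) / 2 := by
    rw [sum_eq_sum_Ico_succ_bot (by omega), abs_flEntry_one hC.le hB.le,
      ← Ico_add_one_right_eq_Icc, sum_congr rfl fun k hk =>
        abs_flEntry_of_two_le hC.le hν (mem_Ico.mp hk).1, mul_add, add_div, mul_sum, sum_div]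
    rfl
  have hlast : 0 < |flEntry α μ ν κμ C (m + 2) (m + 1)| := by
    rcases Nat.eq_zero_or_pos m with rfl | hm
    · rw [abs_flEntry_one hC.le hB.le]
      positivity
    · rw [abs_flEntry_of_two_le hC.le hν (by omega)]
      have := flWeight_pos (μ := μ) hν (by omega : 1 ≤ m + 1)
      positivity
  rw [hN1, ← hfull]
  calc ∑ k ∈ Ico 1 (m + 1), |flEntry α μ ν κμ C (m + 2) k|
      < ∑ k ∈ Ico 1 (m + 1), |flEntry α μ ν κμ C (m + 2) k|
        + |flEntry α μ ν κμ C (m + 2) (m + 1)| := lt_add_of_pos_right _ hlast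
    _ = ∑ k ∈ Ico 1 (m + 2), |flEntry α μ ν κμ C (m + 2) k| :=
      (sum_Ico_succ_top (by omega) _).symm

end FractionalLaplacian

theorem stmt1 (α μ ν κμ C : ℝ) (N : ℕ)
    (hα : 0 < α) (hμl : α < μ)
    (hν : ν = μ - α) (hκ : κμ = if μ < 2 then 1 else 2)
    (hC : 0 < C) (hN : 2 ≤ N) :
    let A := flMatrix α μ ν κμ C N
    let i0 : Fin (N - 1) := ⟨0, by omega⟩
    (∀ i : Fin (N - 1),
        0 < A i i - ∑ j ∈ Finset.univ.filter (fun j => j ≠ i), |A i j|) ∧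
    C * (((2 : ℝ) ^ ν + κμ - 1) / 2 + ((N : ℝ) ^ ν - ((N : ℝ) - 1) ^ ν) / (N : ℝ) ^ μ
        + 2 * ν / (α * (N : ℝ) ^ α))
      < A i0 i0 - ∑ j ∈ Finset.univ.filter (fun j => j ≠ i0), |A i0 j| ∧
    0 < C * (((2 : ℝ) ^ ν + κμ - 1) / 2 + ((N : ℝ) ^ ν - ((N : ℝ) - 1) ^ ν) / (N : ℝ) ^ μ
        + 2 * ν / (α * (N : ℝ) ^ α)) := by
  intro A i0
  have hνpos : 0 < ν := by linarith
  have hB : 0 < (2 : ℝ) ^ ν + κμ - 1 := by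
    have h2 : 1 < (2 : ℝ) ^ ν := Real.one_lt_rpow (by norm_num) hνpos
    have hκ1 : 1 ≤ κμ := by rw [hκ]; split_ifs <;> norm_num
    linarith
  have hT : 0 < ((N : ℝ) ^ ν - ((N : ℝ) - 1) ^ ν) / (N : ℝ) ^ μ := by
    have hN' : (2 : ℝ) ≤ N := by exact_mod_cast hN
    have := Real.rpow_lt_rpow (by linarith) (by linarith : (N : ℝ) - 1 < N) hνpos
    exact div_pos (by linarith) (by positivity)
  have hE : 0 < 2 * ν / (α * (N : ℝ) ^ α) := by positivity
  have hS : 0 ≤ ∑ ℓ ∈ Icc 2 (N - 1), flWeight μ ν ℓ :=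
    sum_nonneg fun ℓ hℓ => (flWeight_pos hνpos (by linarith [(mem_Icc.mp hℓ).1])).le
  have hA : A = symmToeplitz (N - 1) (flEntry α μ ν κμ C N) := rfl
  simp only [hA, symmToeplitz_apply_self, flEntry_zero]
  have hoff := sum_abs_flEntry_lt (α := α) (μ := μ) hC hνpos hB hN
  have hCTE := mul_pos hC (add_pos hT hE)
  refine ⟨fun i => ?_, ?_, by positivity⟩
  · have := sum_abs_offDiag_symmToeplitz_le (flEntry α μ ν κμ C N) i
    linarith
  · have := sum_abs_offDiag_symmToeplitz_of_val_eq_zero (flEntry α μ ν κμ C N) i0 rfl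
    have hCS := mul_nonneg hC.le hS
    linarith
end

section
/- For ν ∈ (0,2), α > 0, and μ = ν + α, the function f(k) = ((k+1)^ν − (k−1)^ν)/(2k^μ) is strictly decreasing for real k ≥ 2 and satisfies f(k) = O(k^{−1−α}) as k → ∞. -/
/-!
Write `g k = (k + 1) ^ ν - (k - 1) ^ ν`. Since `(k ± 1) ^ ν = (k ± 1) * (k ± 1) ^ (ν - 1)`,
`k g'(k) = ν g(k) - ν ((k + 1) ^ (ν - 1) + (k - 1) ^ (ν - 1)) < ν g(k) ≤ μ g(k)`,
which is exactly the sign condition making `g / k ^ μ` strictly decreasing.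
For the rate, the mean value theorem gives `g k = 2 ν c ^ (ν - 1)` with `c ∈ (k - 1, k + 1)`;
for `k ≥ 2` the point `c` is within a factor `2` of `k`, so `g k = O(k ^ (ν - 1))`.
-/

open Real Set Filter Asymptotics

lemma rpow_le_two_rpow_abs_mul_rpow {a b p : ℝ} (hb : 0 < b) (hab : a ≤ 2 * b)
    (hba : b ≤ 2 * a) : a ^ p ≤ 2 ^ |p| * b ^ p := by
  rcases le_total 0 p with hp | hp
  · calc a ^ p ≤ (2 * b) ^ p := rpow_le_rpow (by linarith) hab hp
      _ = 2 ^ |p| * b ^ p := by rw [mul_rpow zero_le_two hb.le, abs_of_nonneg hp]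
  · calc a ^ p ≤ (b / 2) ^ p := rpow_le_rpow_of_nonpos (by positivity) (by linarith) hp
      _ = 2 ^ |p| * b ^ p := by
        rw [div_rpow hb.le zero_le_two, abs_of_nonpos hp, rpow_neg zero_le_two]
        ring

lemma exists_rpow_add_one_sub_rpow_sub_one_eq (ν : ℝ) {k : ℝ} (hk : 1 < k) :
    ∃ c ∈ Ioo (k - 1) (k + 1), (k + 1) ^ ν - (k - 1) ^ ν = 2 * ν * c ^ (ν - 1) := by
  have hderiv : ∀ x ∈ Ioo (k - 1) (k + 1), HasDerivAt (fun x => x ^ ν) (ν * x ^ (ν - 1)) x :=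
    fun x hx => hasDerivAt_rpow_const (Or.inl (by linarith [hx.1]))
  have hcont : ContinuousOn (fun x : ℝ => x ^ ν) (Icc (k - 1) (k + 1)) :=
    fun x hx => (continuousAt_rpow_const x ν (Or.inl (by linarith [hx.1]))).continuousWithinAt
  obtain ⟨c, hc, hslope⟩ := exists_hasDerivAt_eq_slope _ _ (by linarith) hcont hderiv
  refine ⟨c, hc, ?_⟩
  rw [show k + 1 - (k - 1) = 2 by ring] at hslope
  linarith

lemma abs_rpow_add_one_sub_rpow_sub_one_le (ν : ℝ) {k : ℝ} (hk : 2 ≤ k) :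
    |(k + 1) ^ ν - (k - 1) ^ ν| ≤ 2 * |ν| * 2 ^ |ν - 1| * k ^ (ν - 1) := by
  obtain ⟨c, ⟨hc₁, hc₂⟩, hc⟩ :=
    exists_rpow_add_one_sub_rpow_sub_one_eq ν (by linarith : 1 < k)
  have hc₀ : 0 < c := by linarith
  rw [hc, abs_mul, abs_mul, abs_two, abs_of_pos (rpow_pos_of_pos hc₀ _), mul_assoc _ (2 ^ _)]
  gcongr
  exact rpow_le_two_rpow_abs_mul_rpow (by linarith) (by linarith) (by linarith)

lemma isBigO_rpow_add_one_sub_rpow_sub_one (ν : ℝ) :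
    (fun k : ℝ => (k + 1) ^ ν - (k - 1) ^ ν) =O[atTop] fun k => k ^ (ν - 1) := by
  refine IsBigO.of_bound (2 * |ν| * 2 ^ |ν - 1|) ?_
  filter_upwards [eventually_ge_atTop 2] with k hk
  rw [norm_eq_abs, norm_eq_abs, abs_of_pos (rpow_pos_of_pos (by linarith) _)]
  exact abs_rpow_add_one_sub_rpow_sub_one_le ν hk

lemma isBigO_rpow_add_one_sub_rpow_sub_one_div (ν μ : ℝ) :
    (fun k : ℝ => ((k + 1) ^ ν - (k - 1) ^ ν) / (2 * k ^ μ)) =O[atTop]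
      fun k => k ^ (ν - 1 - μ) := by
  have hden : (fun k : ℝ => (2 * k ^ μ)⁻¹) =O[atTop] fun k => k ^ (-μ) := by
    refine (isBigO_const_mul_self 2⁻¹ _ _).congr' ?_ EventuallyEq.rfl
    filter_upwards [eventually_gt_atTop 0] with k hk
    rw [rpow_neg hk.le, mul_inv]
  refine ((isBigO_rpow_add_one_sub_rpow_sub_one ν).mul hden).congr'
    (Eventually.of_forall fun k => (div_eq_mul_inv _ _).symm) ?_
  filter_upwards [eventually_gt_atTop 0] with k hk
  rw [← rpow_add hk]
  ring_nf

lemma hasDerivAt_rpow_add_one_sub_rpow_sub_one (ν : ℝ) {x : ℝ} (hx : 1 < x) :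
    HasDerivAt (fun k : ℝ => (k + 1) ^ ν - (k - 1) ^ ν)
      (ν * ((x + 1) ^ (ν - 1) - (x - 1) ^ (ν - 1))) x := by
  have hplus :=
    (hasDerivAt_rpow_const (p := ν) (Or.inl (by linarith : x + 1 ≠ 0))).comp_add_const x 1
  have hminus :=
    (hasDerivAt_rpow_const (p := ν) (Or.inl (by linarith : x - 1 ≠ 0))).comp_sub_const x 1
  rw [mul_sub]
  exact hplus.sub hminus

lemma mul_deriv_rpow_add_one_sub_rpow_sub_one_lt {ν μ x : ℝ} (hν : 0 < ν) (hνμ : ν ≤ μ)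
    (hx : 1 < x) :
    x * (ν * ((x + 1) ^ (ν - 1) - (x - 1) ^ (ν - 1))) < μ * ((x + 1) ^ ν - (x - 1) ^ ν) := by
  have hplus : (x + 1) ^ ν = (x + 1) * (x + 1) ^ (ν - 1) := by
    rw [mul_comm, ← rpow_add_one (by linarith), sub_add_cancel]
  have hminus : (x - 1) ^ ν = (x - 1) * (x - 1) ^ (ν - 1) := by
    rw [mul_comm, ← rpow_add_one (by linarith), sub_add_cancel]
  have hpos_plus : 0 < (x + 1) ^ (ν - 1) := rpow_pos_of_pos (by linarith) _
  have hpos_minus : 0 < (x - 1) ^ (ν - 1) := rpow_pos_of_pos (by linarith) _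
  have hg : 0 < (x + 1) ^ ν - (x - 1) ^ ν :=
    sub_pos.2 (rpow_lt_rpow (by linarith) (by linarith) hν)
  calc x * (ν * ((x + 1) ^ (ν - 1) - (x - 1) ^ (ν - 1)))
      = ν * ((x + 1) ^ ν - (x - 1) ^ ν) - ν * ((x + 1) ^ (ν - 1) + (x - 1) ^ (ν - 1)) := by
        rw [hplus, hminus]; ring
    _ < ν * ((x + 1) ^ ν - (x - 1) ^ ν) := by
        linarith [mul_pos hν (add_pos hpos_plus hpos_minus)]
    _ ≤ μ * ((x + 1) ^ ν - (x - 1) ^ ν) := mul_le_mul_of_nonneg_right hνμ hg.le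

lemma strictAntiOn_rpow_add_one_sub_rpow_sub_one_div {ν μ : ℝ} (hν : 0 < ν)
    (hνμ : ν ≤ μ) :
    StrictAntiOn (fun k : ℝ => ((k + 1) ^ ν - (k - 1) ^ ν) / (2 * k ^ μ)) (Ioi 1) := by
  have hderiv : ∀ x ∈ Ioi (1 : ℝ), HasDerivAt
      (fun k : ℝ => ((k + 1) ^ ν - (k - 1) ^ ν) / (2 * k ^ μ))
      ((ν * ((x + 1) ^ (ν - 1) - (x - 1) ^ (ν - 1)) * (2 * x ^ μ)
          - ((x + 1) ^ ν - (x - 1) ^ ν) * (2 * (μ * x ^ (μ - 1)))) / (2 * x ^ μ) ^ 2) x := by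
    intro x hx
    have hx₀ : 0 < x := by linarith [mem_Ioi.1 hx]
    exact (hasDerivAt_rpow_add_one_sub_rpow_sub_one ν hx).div
      ((hasDerivAt_rpow_const (Or.inl hx₀.ne')).const_mul 2) (by positivity)
  refine strictAntiOn_of_hasDerivWithinAt_neg (convex_Ioi 1)
    (fun x hx => (hderiv x hx).continuousAt.continuousWithinAt)
    (fun x hx => (hderiv x (interior_subset hx)).hasDerivWithinAt) fun x hx => ?_
  rw [interior_Ioi] at hx
  have hx₀ : 0 < x := by linarith [mem_Ioi.1 hx]
  have hxμ : x ^ μ = x * x ^ (μ - 1) := by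
    rw [mul_comm, ← rpow_add_one hx₀.ne', sub_add_cancel]
  have hQ : 0 < x ^ (μ - 1) := rpow_pos_of_pos hx₀ _
  refine div_neg_of_neg_of_pos ?_ (by rw [hxμ]; positivity)
  rw [hxμ]
  linarith [mul_lt_mul_of_pos_left (mul_deriv_rpow_add_one_sub_rpow_sub_one_lt hν hνμ hx) hQ]

theorem stmt4_general (ν α μ : ℝ) (hν0 : 0 < ν)
    (hα0 : 0 < α) (hμ : μ = ν + α) :
    StrictAntiOn (fun k : ℝ => ((k + 1) ^ ν - (k - 1) ^ ν) / (2 * k ^ μ)) (Set.Ici 2) ∧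
    Asymptotics.IsBigO Filter.atTop
      (fun k : ℝ => ((k + 1) ^ ν - (k - 1) ^ ν) / (2 * k ^ μ))
      (fun k : ℝ => k ^ (-1 - α)) := by
  subst hμ
  refine ⟨(strictAntiOn_rpow_add_one_sub_rpow_sub_one_div hν0 (by linarith)).mono
    fun k (hk : 2 ≤ k) => mem_Ioi.2 (by linarith), ?_⟩
  convert isBigO_rpow_add_one_sub_rpow_sub_one_div ν (ν + α) using 3
  ring

theorem stmt4 (ν α μ : ℝ) (hν0 : 0 < ν) (hν2 : ν < 2)
    (hα0 : 0 < α) (hα2 : α < 2) (hμ : μ = ν + α) :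
    StrictAntiOn (fun k : ℝ => ((k + 1) ^ ν - (k - 1) ^ ν) / (2 * k ^ μ)) (Set.Ici 2) ∧
    Asymptotics.IsBigO Filter.atTop
      (fun k : ℝ => ((k + 1) ^ ν - (k - 1) ^ ν) / (2 * k ^ μ))
      (fun k : ℝ => k ^ (-1 - α)) :=
  stmt4_general ν α μ hν0 hα0 hμ
end

section
/- The inequality |a_{12}| − |a_{13}| = (2^ν + κ_μ − 1)/2 − (3^ν − 1)/2^{μ+1} ≥ (4^{ν + α/2} − 3^ν + 1)/2^{ν + α + 1} > 0 holds, where a_{12}, a_{13} are entries of the (rescaled) discretized fractional Laplacian matrix. -/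
/-!
Writing `x = 2^ν`, `q = 2^α` and `t = 3^ν`, both denominators equal `2xq` and
`4^(ν + α/2) = x²q`, so the difference of the two sides collapses to `(κ_μ - 1)/2 ≥ 0`.
Positivity of the bound comes from `3^ν ≤ 4^ν ≤ 4^(ν + α/2)`.
-/

open Real

lemma four_rpow_add_half_eq (ν α : ℝ) :
    (4 : ℝ) ^ (ν + α / 2) = 2 ^ ν * 2 ^ (ν + α + 1) / 2 := by
  have h2 : (0 : ℝ) < 2 := two_pos
  rw [show (4 : ℝ) = 2 ^ (2 : ℝ) by norm_num, ← rpow_mul h2.le,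
    eq_div_iff h2.ne', ← rpow_add h2, ← rpow_add_one h2.ne']
  ring_nf

lemma entry_gap_sub_bound_eq (ν α κ : ℝ) :
    ((2 : ℝ) ^ ν + κ - 1) / 2 - ((3 : ℝ) ^ ν - 1) / 2 ^ (ν + α + 1)
      - ((4 : ℝ) ^ (ν + α / 2) - 3 ^ ν + 1) / 2 ^ (ν + α + 1) = (κ - 1) / 2 := by
  have hD : (2 : ℝ) ^ (ν + α + 1) ≠ 0 := (rpow_pos_of_pos two_pos _).ne'
  rw [four_rpow_add_half_eq]
  field_simp
  ring

lemma three_rpow_lt_four_rpow_add_one {ν α : ℝ} (hν : 0 ≤ ν) (hα : 0 ≤ α) :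
    (3 : ℝ) ^ ν < (4 : ℝ) ^ (ν + α / 2) + 1 := by
  have h34 : (3 : ℝ) ^ ν ≤ 4 ^ ν := rpow_le_rpow (by norm_num) (by norm_num) hν
  have h44 : (4 : ℝ) ^ ν ≤ 4 ^ (ν + α / 2) :=
    rpow_le_rpow_of_exponent_le (by norm_num) (by linarith)
  linarith

theorem stmt5_general (α μ ν κμ : ℝ) (hα : 0 < α) (hμl : α < μ)
    (hν : ν = μ - α) (hκ : κμ = if μ < 2 then 1 else 2) :
    ((2 : ℝ) ^ ν + κμ - 1) / 2 - ((3 : ℝ) ^ ν - 1) / 2 ^ (μ + 1)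
      ≥ ((4 : ℝ) ^ (ν + α / 2) - 3 ^ ν + 1) / 2 ^ (ν + α + 1) ∧
    0 < ((4 : ℝ) ^ (ν + α / 2) - 3 ^ ν + 1) / 2 ^ (ν + α + 1) := by
  have hμ : μ + 1 = ν + α + 1 := by rw [hν]; ring
  have hκ1 : 1 ≤ κμ := by rw [hκ]; split_ifs <;> norm_num
  have hgap := entry_gap_sub_bound_eq ν α κμ
  rw [hμ]
  refine ⟨by linarith, div_pos ?_ (rpow_pos_of_pos two_pos _)⟩
  linarith [three_rpow_lt_four_rpow_add_one (ν := ν) (by linarith) hα.le]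

theorem stmt5 (α μ ν κμ : ℝ) (hα : 0 < α) (hα2 : α < 2) (hμl : α < μ) (hμu : μ ≤ 2)
    (hν : ν = μ - α) (hκ : κμ = if μ < 2 then 1 else 2) :
    ((2 : ℝ) ^ ν + κμ - 1) / 2 - ((3 : ℝ) ^ ν - 1) / 2 ^ (μ + 1)
      ≥ ((4 : ℝ) ^ (ν + α / 2) - 3 ^ ν + 1) / 2 ^ (ν + α + 1) ∧
    0 < ((4 : ℝ) ^ (ν + α / 2) - 3 ^ ν + 1) / 2 ^ (ν + α + 1) :=
  stmt5_general α μ ν κμ hα hμl hν hκ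
end

section
/- Let b > 0, K a nonnegative diagonal matrix, and A a symmetric matrix with positive diagonal entries and D(A) ≥ 0. Then the matrix M = bI + KA is invertible, and for every y ∈ ℝⁿ, ‖My‖_∞ ≥ b‖y‖_∞; consequently ‖M^{-1}‖_∞ ≤ 1/b. -/
/-!
Every row of `M = b • 1 + diagonal κ * A` has excess `|M i i| - ∑ j ≠ i, |M i j| ≥ b`: its
diagonal entry is `b + κ i * A i i` and its off-diagonal entries are `κ i * A i j`, so the excess
is at least `b + κ i * (excess of row i of A) ≥ b`. Reading `M *ᵥ y` at a coordinate where `|y i|` is maximal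
gives `‖M *ᵥ y‖ ≥ b * ‖y‖` in the sup norm. This lower bound makes `M` injective, hence
invertible, and applied to `M⁻¹ *ᵥ y` it bounds the inverse.
-/

/-- Diagonal dominance functional `D(C) = min_i (|C_ii| - Σ_{j≠i} |C_ij|)`. -/
noncomputable def DD {n : ℕ} (C : Matrix (Fin n) (Fin n) ℝ) : ℝ :=
  ⨅ i : Fin n, (|C i i| - ∑ j ∈ Finset.univ.filter (fun j => j ≠ i), |C i j|)

open Finset

namespace Matrix

section RowExcess

variable {ι : Type*} [Fintype ι] [DecidableEq ι]

noncomputable def rowExcess (C : Matrix ι ι ℝ) (i : ι) : ℝ :=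
  |C i i| - ∑ j ∈ univ.filter (fun j => j ≠ i), |C i j|

lemma rowExcess_mul_abs_le_abs_mulVec (C : Matrix ι ι ℝ) {y : ι → ℝ} {i : ι}
    (hi : ∀ j, |y j| ≤ |y i|) : C.rowExcess i * |y i| ≤ |(C *ᵥ y) i| := by
  have hsplit : (C *ᵥ y) i = C i i * y i + ∑ j ∈ univ.filter (· ≠ i), C i j * y j := by
    rw [mulVec, dotProduct, filter_ne', add_sum_erase _ (fun j => C i j * y j) (mem_univ i)]
  have hoff : |∑ j ∈ univ.filter (· ≠ i), C i j * y j|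
      ≤ (∑ j ∈ univ.filter (· ≠ i), |C i j|) * |y i| := by
    rw [sum_mul]
    refine (abs_sum_le_sum_abs _ _).trans (sum_le_sum fun j _ => ?_)
    rw [abs_mul]
    exact mul_le_mul_of_nonneg_left (hi j) (abs_nonneg _)
  calc C.rowExcess i * |y i|
      = |C i i * y i| - (∑ j ∈ univ.filter (· ≠ i), |C i j|) * |y i| := by
        rw [rowExcess, sub_mul, abs_mul]
    _ ≤ |C i i * y i| - |∑ j ∈ univ.filter (· ≠ i), C i j * y j| := by linarith
    _ ≤ |(C *ᵥ y) i| := by rw [hsplit]; exact abs_sub_abs_le_abs_add _ _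

theorem mul_norm_le_norm_mulVec_of_le_rowExcess {C : Matrix ι ι ℝ} {c : ℝ}
    (h : ∀ i, c ≤ C.rowExcess i) (y : ι → ℝ) : c * ‖y‖ ≤ ‖C *ᵥ y‖ := by
  cases isEmpty_or_nonempty ι
  · simp [Subsingleton.elim y 0]
  obtain ⟨i, hi⟩ := Finite.exists_max fun i => |y i|
  have hy : ‖y‖ = |y i| :=
    le_antisymm ((pi_norm_le_iff_of_nonneg (abs_nonneg _)).2 hi) (norm_le_pi_norm y i)
  calc c * ‖y‖ ≤ C.rowExcess i * |y i| := hy ▸ mul_le_mul_of_nonneg_right (h i) (norm_nonneg y)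
    _ ≤ |(C *ᵥ y) i| := C.rowExcess_mul_abs_le_abs_mulVec hi
    _ ≤ ‖C *ᵥ y‖ := norm_le_pi_norm (C *ᵥ y) i

theorem le_rowExcess_smul_one_add_diagonal_mul (b : ℝ) {κ : ι → ℝ} (hκ : ∀ i, 0 ≤ κ i)
    {A : Matrix ι ι ℝ} (hA : ∀ i, 0 ≤ A i i) (i : ι) :
    b + κ i * A.rowExcess i ≤ (b • 1 + diagonal κ * A).rowExcess i := by
  have hdiag : (b • 1 + diagonal κ * A) i i = b + κ i * A i i := by simp
  have hoff : ∀ j ∈ univ.filter (· ≠ i), |(b • 1 + diagonal κ * A) i j| = κ i * |A i j| := by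
    intro j hj
    simp [one_apply_ne' (mem_filter.mp hj).2, abs_mul, abs_of_nonneg (hκ i)]
  rw [rowExcess, rowExcess, hdiag, sum_congr rfl hoff, ← mul_sum, abs_of_nonneg (hA i), mul_sub]
  linarith [le_abs_self (b + κ i * A i i)]

end RowExcess

section LowerBound

variable {ι K : Type*} [Fintype ι] [DecidableEq ι] [NormedField K] {C : Matrix ι ι K} {c : ℝ}

theorem isUnit_of_mul_norm_le_norm_mulVec (hc : 0 < c) (h : ∀ y, c * ‖y‖ ≤ ‖C *ᵥ y‖) :
    IsUnit C := by
  rw [isUnit_iff_isUnit_det, isUnit_iff_ne_zero]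
  intro hdet
  obtain ⟨v, hv, hCv⟩ := exists_mulVec_eq_zero_iff.mpr hdet
  have hv' := h v
  rw [hCv, norm_zero] at hv'
  exact hv (norm_le_zero_iff.mp (nonpos_of_mul_nonpos_right hv' hc))

theorem norm_inv_mulVec_le_of_mul_norm_le_norm_mulVec (hc : 0 < c)
    (h : ∀ y, c * ‖y‖ ≤ ‖C *ᵥ y‖) (y : ι → K) : ‖C⁻¹ *ᵥ y‖ ≤ 1 / c * ‖y‖ := by
  have hdet := (isUnit_iff_isUnit_det C).mp (isUnit_of_mul_norm_le_norm_mulVec hc h)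
  have hCinv : C *ᵥ (C⁻¹ *ᵥ y) = y := by
    rw [mulVec_mulVec, mul_nonsing_inv _ hdet, one_mulVec]
  rw [one_div, inv_mul_eq_div, le_div_iff₀' hc]
  simpa [hCinv] using h (C⁻¹ *ᵥ y)

end LowerBound

end Matrix

lemma DD_le_rowExcess {n : ℕ} (C : Matrix (Fin n) (Fin n) ℝ) (i : Fin n) :
    DD C ≤ C.rowExcess i :=
  ciInf_le (Set.finite_range _).bddBelow i

open Matrix in
theorem stmt10_general {n : ℕ} (b : ℝ) (hb : 0 < b)
    (κ : Fin n → ℝ) (hκ : ∀ i, 0 ≤ κ i)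
    (A : Matrix (Fin n) (Fin n) ℝ)
    (hA : ∀ i, 0 < A i i) (hDA : 0 ≤ DD A) :
    let M := b • (1 : Matrix (Fin n) (Fin n) ℝ) + Matrix.diagonal κ * A
    IsUnit M ∧
    (∀ y : Fin n → ℝ, b * ‖y‖ ≤ ‖M.mulVec y‖) ∧
    (∀ y : Fin n → ℝ, ‖(M⁻¹).mulVec y‖ ≤ (1 / b) * ‖y‖) := by
  intro M
  have hrow (i : Fin n) : b ≤ M.rowExcess i := by
    have := mul_nonneg (hκ i) (hDA.trans (DD_le_rowExcess A i))
    linarith [le_rowExcess_smul_one_add_diagonal_mul b hκ (fun i => (hA i).le) i]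
  have hbound := mul_norm_le_norm_mulVec_of_le_rowExcess hrow
  exact ⟨isUnit_of_mul_norm_le_norm_mulVec hb hbound, hbound,
    norm_inv_mulVec_le_of_mul_norm_le_norm_mulVec hb hbound⟩

theorem stmt10 {n : ℕ} (hn : 0 < n) (b : ℝ) (hb : 0 < b)
    (κ : Fin n → ℝ) (hκ : ∀ i, 0 ≤ κ i)
    (A : Matrix (Fin n) (Fin n) ℝ) (hAs : A.IsSymm)
    (hA : ∀ i, 0 < A i i) (hDA : 0 ≤ DD A) :
    let M := b • (1 : Matrix (Fin n) (Fin n) ℝ) + Matrix.diagonal κ * A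
    IsUnit M ∧
    (∀ y : Fin n → ℝ, b * ‖y‖ ≤ ‖M.mulVec y‖) ∧
    (∀ y : Fin n → ℝ, ‖(M⁻¹).mulVec y‖ ≤ (1 / b) * ‖y‖) :=
  stmt10_general b hb κ hκ A hA hDA
end

section
/- All eigenvalues of the Strang circulant approximation s(A) of the discretized fractional Laplacian matrix A lie inside the disc {z ∈ ℝ : |z − a_{11}| < a_{11}}, and hence are strictly positive for all N. -/
/-! By Gershgorin, every eigenvalue of a circulant matrix with first column `v` lies within
`∑_{d ≠ 0} |v d|` of `v 0`. Folding the offsets `d` and `n - d` onto `min d (n - d)` at most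
doubles the off-diagonal mass of `A`, and the diagonal entry `a₀` exceeds twice that mass by
exactly `C` times the (positive) boundary and tail terms of its defining sum. -/

open Finset

theorem Matrix.circulant_eigenvalue_mem_closedBall {K n : Type*} [NormedField K] [Fintype n]
    [DecidableEq n] [AddGroup n] {v : n → K} {z : K}
    (hz : Module.End.HasEigenvalue (Matrix.toLin' (Matrix.circulant v)) z) :
    z ∈ Metric.closedBall (v 0) (∑ d ∈ univ.erase 0, ‖v d‖) := by
  obtain ⟨i, hi⟩ := eigenvalue_mem_ball hz
  simp only [Matrix.circulant_apply, sub_self] at hi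
  convert hi using 1
  rw [sum_erase_eq_sub (mem_univ _), sum_erase_eq_sub (mem_univ _), sub_self,
    ← (Equiv.subLeft i).sum_comp]
  rfl

theorem Fin.sum_univ_erase_zero_eq_sum_Ico {M : Type*} [AddCommGroup M] {n : ℕ} [NeZero n]
    (f : ℕ → M) : ∑ d ∈ univ.erase (0 : Fin n), f d = ∑ k ∈ Ico 1 n, f k := by
  rw [sum_erase_eq_sub (mem_univ _), Fin.sum_univ_eq_sum_range, range_eq_Ico,
    sum_eq_sum_Ico_succ_bot (NeZero.pos n)]
  simp

theorem sum_Ico_abs_apply_min_sub_le (a : ℕ → ℝ) (n : ℕ) :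
    ∑ k ∈ Ico 1 n, |a (min k (n - k))| ≤ 2 * ∑ k ∈ Ico 1 n, |a k| := by
  have hfold : ∀ k, |a (min k (n - k))| ≤ |a k| + |a (n - k)| := fun k => by
    rcases min_choice k (n - k) with h | h <;> rw [h] <;> simp
  have hreflect : ∑ k ∈ Ico 1 n, |a (n - k)| = ∑ k ∈ Ico 1 n, |a k| := by
    rw [sum_Ico_reflect (fun k => |a k|) 1 n.le_succ, Nat.add_sub_cancel_left, Nat.add_sub_cancel]
  calc ∑ k ∈ Ico 1 n, |a (min k (n - k))| ≤ ∑ k ∈ Ico 1 n, (|a k| + |a (n - k)|) :=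
        sum_le_sum fun k _ => hfold k
    _ = 2 * ∑ k ∈ Ico 1 n, |a k| := by rw [sum_add_distrib, hreflect, two_mul]

section FractionalLaplacian

variable {α μ ν κμ C : ℝ} {N : ℕ}

theorem two_mul_abs_flEntry_one (hν : 0 ≤ ν) (hκ : 0 ≤ κμ) (hC : 0 ≤ C) :
    2 * |flEntry α μ ν κμ C N 1| = C * ((2 : ℝ) ^ ν + κμ - 1) := by
  have h2 : (1 : ℝ) ≤ 2 ^ ν := Real.one_le_rpow (by norm_num) hν
  have hE : 0 ≤ C * ((2 : ℝ) ^ ν + κμ - 1) := mul_nonneg hC (by linarith)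
  rw [flEntry, if_neg one_ne_zero, if_pos rfl, abs_neg, abs_of_nonneg (by positivity)]
  ring

theorem two_mul_abs_flEntry_of_two_le (hν : 0 ≤ ν) (hC : 0 ≤ C) {k : ℕ} (hk : 2 ≤ k) :
    2 * |flEntry α μ ν κμ C N k| = C * ((((k : ℝ) + 1) ^ ν - ((k : ℝ) - 1) ^ ν) / (k : ℝ) ^ μ) := by
  have hk1 : (1 : ℝ) ≤ k := by exact_mod_cast (by omega : 1 ≤ k)
  have hnum : ((k : ℝ) - 1) ^ ν ≤ ((k : ℝ) + 1) ^ ν :=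
    Real.rpow_le_rpow (by linarith) (by linarith) hν
  have hden : 0 < (k : ℝ) ^ μ := Real.rpow_pos_of_pos (by linarith) μ
  rw [flEntry, if_neg (by omega), if_neg (by omega), abs_neg,
    abs_of_nonneg (div_nonneg (mul_nonneg hC (by linarith)) (by positivity))]
  field_simp

theorem flEntry_zero_sub_two_mul_sum_abs (hν : 0 ≤ ν) (hκ : 0 ≤ κμ) (hC : 0 ≤ C) (hN : 2 ≤ N) :
    flEntry α μ ν κμ C N 0 - 2 * ∑ k ∈ Icc 1 (N - 1), |flEntry α μ ν κμ C N k| =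
      C * (((N : ℝ) ^ ν - ((N : ℝ) - 1) ^ ν) / (N : ℝ) ^ μ + 2 * ν / (α * (N : ℝ) ^ α)) := by
  have hoff : 2 * ∑ k ∈ Icc 1 (N - 1), |flEntry α μ ν κμ C N k| =
      C * (((2 : ℝ) ^ ν + κμ - 1) +
        ∑ k ∈ Icc 2 (N - 1), (((k : ℝ) + 1) ^ ν - ((k : ℝ) - 1) ^ ν) / (k : ℝ) ^ μ) := by
    rw [← Finset.insert_Icc_add_one_left_eq_Icc (by omega), sum_insert (by simp), mul_add,
      mul_sum, mul_add, mul_sum, two_mul_abs_flEntry_one hν hκ hC]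
    congr 1
    exact sum_congr rfl fun k hk => two_mul_abs_flEntry_of_two_le hν hC (mem_Icc.1 hk).1
  rw [hoff, flEntry, if_pos rfl]
  ring

theorem two_mul_sum_abs_flEntry_lt (hα : 0 < α) (hν : 0 < ν) (hκ : 0 ≤ κμ) (hC : 0 < C)
    (hN : 2 ≤ N) :
    2 * ∑ k ∈ Icc 1 (N - 1), |flEntry α μ ν κμ C N k| < flEntry α μ ν κμ C N 0 := by
  have hN1 : (1 : ℝ) ≤ N := by exact_mod_cast (by omega : 1 ≤ N)
  have hboundary : 0 < ((N : ℝ) ^ ν - ((N : ℝ) - 1) ^ ν) / (N : ℝ) ^ μ :=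
    div_pos (sub_pos.2 (Real.rpow_lt_rpow (by linarith) (by linarith) hν))
      (Real.rpow_pos_of_pos (by linarith) μ)
  have htail : 0 < 2 * ν / (α * (N : ℝ) ^ α) := by
    have := Real.rpow_pos_of_pos (by linarith : (0 : ℝ) < N) α
    positivity
  have := flEntry_zero_sub_two_mul_sum_abs (α := α) (μ := μ) hν.le hκ hC.le hN
  linarith [mul_pos hC (add_pos hboundary htail)]

end FractionalLaplacian

theorem stmt11_general (α μ ν κμ C : ℝ) (N : ℕ)
    (hα : 0 < α) (hμl : α < μ)
    (hν : ν = μ - α) (hκ : κμ = if μ < 2 then 1 else 2)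
    (hC : 0 < C) (hN : 2 ≤ N) :
    -- Strang circulant approximation of A: first column
    -- [a₁₁, a₁₂, …, a_{1,⌊(N+1)/2⌋}, a_{1,⌊N/2⌋}, …, a₁₂]ᵀ
    let v : Fin (N - 1) → ℝ :=
      fun k => flEntry α μ ν κμ C N (min k.val ((N - 1) - k.val))
    let S := Matrix.circulant v
    ∀ z : ℝ, Module.End.HasEigenvalue (Matrix.toLin' S) z →
      |z - flEntry α μ ν κμ C N 0| < flEntry α μ ν κμ C N 0 ∧ 0 < z := by
  intro v S z hz
  have : NeZero (N - 1) := ⟨by omega⟩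
  set a := flEntry α μ ν κμ C N
  have hν0 : 0 < ν := by linarith
  have hκ0 : 0 ≤ κμ := by rw [hκ]; split_ifs <;> norm_num
  have hball := Matrix.circulant_eigenvalue_mem_closedBall hz
  rw [Metric.mem_closedBall, Real.dist_eq] at hball
  have hradius : ∑ d ∈ univ.erase 0, ‖v d‖ ≤ 2 * ∑ k ∈ Icc 1 (N - 1), |a k| :=
    calc ∑ d ∈ univ.erase 0, ‖v d‖ = ∑ k ∈ Ico 1 (N - 1), |a (min k (N - 1 - k))| :=
          Fin.sum_univ_erase_zero_eq_sum_Ico fun k => |a (min k (N - 1 - k))|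
      _ ≤ 2 * ∑ k ∈ Ico 1 (N - 1), |a k| := sum_Ico_abs_apply_min_sub_le a (N - 1)
      _ ≤ 2 * ∑ k ∈ Icc 1 (N - 1), |a k| := by
          gcongr 2 * ?_
          exact sum_le_sum_of_subset_of_nonneg Ico_subset_Icc_self fun _ _ _ => abs_nonneg _
  have hv0 : v 0 = a 0 := by simp [v, a]
  have hdisc : |z - a 0| < a 0 := by
    rw [hv0] at hball
    linarith [two_mul_sum_abs_flEntry_lt hα hν0 hκ0 hC hN (μ := μ)]
  exact ⟨hdisc, by linarith [(abs_lt.1 hdisc).1]⟩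

theorem stmt11 (α μ ν κμ C : ℝ) (N : ℕ)
    (hα : 0 < α) (hα2 : α < 2) (hμl : α < μ) (hμu : μ ≤ 2)
    (hν : ν = μ - α) (hκ : κμ = if μ < 2 then 1 else 2)
    (hC : 0 < C) (hN : 2 ≤ N) :
    -- Strang circulant approximation of A: first column
    -- [a₁₁, a₁₂, …, a_{1,⌊(N+1)/2⌋}, a_{1,⌊N/2⌋}, …, a₁₂]ᵀ
    let v : Fin (N - 1) → ℝ :=
      fun k => flEntry α μ ν κμ C N (min k.val ((N - 1) - k.val))
    let S := Matrix.circulant v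
    ∀ z : ℝ, Module.End.HasEigenvalue (Matrix.toLin' S) z →
      |z - flEntry α μ ν κμ C N 0| < flEntry α μ ν κμ C N 0 ∧ 0 < z :=
  stmt11_general α μ ν κμ C N hα hμl hν hκ hC hN
end

section
/- Let B₁, …, B_M be invertible n×n real matrices with ‖B_m^{-1}‖_∞ ≤ Γ(1−γ)/b_1^{(m,γ)}, let the graded-L1 weights satisfy 0 < b_1^{(m,γ)} ≤ b_2^{(m,γ)} ≤ ⋯ ≤ b_m^{(m,γ)}, and suppose the vectors u⁰, u¹, …, u^M satisfy b_m^{(m,γ)}‖u^m‖_∞ ≤ Σ_{k=1}^{m−1}(b_{k+1}^{(m,γ)} − b_k^{(m,γ)})‖u^k‖_∞ + b_1^{(m,γ)}[‖u⁰‖_∞ + (Γ(1−γ)/b_1^{(m,γ)})‖f^m‖_∞] for each m. Then for all k = 1, …, M: ‖u^k‖_∞ ≤ ‖u⁰‖_∞ + Γ(1−γ) max_{1≤s≤k} ‖f^s‖_∞ / b_1^{(s,γ)}. -/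
/-!
Strong induction on `k`. The recursion bounds `b_k^{(k)} ‖u^k‖` by a combination of
`‖u^1‖, …, ‖u^{k-1}‖` and `‖u^0‖ + Γ(1-γ) ‖f^k‖ / b_1^{(k)}` whose weights `b_{j+1}^{(k)} - b_j^{(k)}`
and `b_1^{(k)}` are nonnegative and telescope to `b_k^{(k)}`. Each of these quantities is at most the
claimed bound at `k` (by induction, as the bound grows with `k`), hence so is `‖u^k‖`.
-/

open Finset

theorem Finset.sum_Icc_sub_one_sub {G : Type*} [AddCommGroup G] (g : ℕ → G) {l m : ℕ}
    (hlm : l ≤ m) (hm : 0 < m) :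
    ∑ k ∈ Icc l (m - 1), (g (k + 1) - g k) = g m - g l := by
  rw [Icc_sub_one_right_eq_Ico_of_not_isMin (by simpa using hm.ne'), sum_Ico_sub g hlm]

theorem le_of_mul_le_telescoping_sum {a x : ℕ → ℝ} {m : ℕ} {c E : ℝ} (hm : 1 ≤ m)
    (ha₁ : 0 < a 1) (ha : ∀ k, 1 ≤ k → k < m → a k ≤ a (k + 1))
    (hx : ∀ k, 1 ≤ k → k < m → x k ≤ E) (hc : c ≤ E)
    (hrec : a m * x m ≤ (∑ k ∈ Icc 1 (m - 1), (a (k + 1) - a k) * x k) + a 1 * c) :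
    x m ≤ E := by
  have hmem : ∀ k ∈ Icc 1 (m - 1), 1 ≤ k ∧ k < m := fun k hk => by
    rw [mem_Icc] at hk; omega
  have hw : ∀ k ∈ Icc 1 (m - 1), 0 ≤ a (k + 1) - a k := fun k hk =>
    sub_nonneg.mpr (ha k (hmem k hk).1 (hmem k hk).2)
  have htel := sum_Icc_sub_one_sub a hm (by omega)
  have ham : 0 < a m := by linarith [sum_nonneg hw]
  refine le_of_mul_le_mul_left ?_ ham
  calc a m * x m ≤ (∑ k ∈ Icc 1 (m - 1), (a (k + 1) - a k) * x k) + a 1 * c := hrec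
    _ ≤ (∑ k ∈ Icc 1 (m - 1), (a (k + 1) - a k) * E) + a 1 * E := by
      gcongr with k hk
      · exact hw k hk
      · exact hx k (hmem k hk).1 (hmem k hk).2
    _ = a m * E := by rw [← sum_mul, htel]; ring

theorem stmt15_general {n : ℕ} (M : ℕ) (γ : ℝ) (hγ1 : γ < 1)
    (b : ℕ → ℕ → ℝ)  -- b m k = b_k^{(m,γ)}
    (hb1 : ∀ m, 1 ≤ m → m ≤ M → 0 < b m 1)
    (hbmono : ∀ m, 1 ≤ m → m ≤ M → ∀ k, 1 ≤ k → k < m → b m k ≤ b m (k + 1))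
    (u f : ℕ → (Fin n → ℝ))
    (hrec : ∀ m, 1 ≤ m → m ≤ M →
      b m m * ‖u m‖ ≤ (∑ k ∈ Finset.Icc 1 (m - 1), (b m (k + 1) - b m k) * ‖u k‖)
        + b m 1 * (‖u 0‖ + (Real.Gamma (1 - γ) / b m 1) * ‖f m‖)) :
    ∀ k, (hk1 : 1 ≤ k) → k ≤ M →
      ‖u k‖ ≤ ‖u 0‖ + Real.Gamma (1 - γ) *
        ((Finset.Icc 1 k).sup' (Finset.nonempty_Icc.mpr hk1)
          (fun s => ‖f s‖ / b s 1)) := by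
  have hΓ : 0 ≤ Real.Gamma (1 - γ) := (Real.Gamma_pos_of_pos (by linarith)).le
  intro k
  induction k using Nat.strong_induction_on with
  | _ k ih =>
  intro hk1 hkM
  refine le_of_mul_le_telescoping_sum (x := fun j => ‖u j‖) hk1 (hb1 k hk1 hkM)
    (hbmono k hk1 hkM) (fun j hj1 hjk => ?_) ?_ (hrec k hk1 hkM)
  · refine (ih j hjk hj1 (by omega)).trans ?_
    gcongr
  · rw [div_mul_eq_mul_div, mul_div_assoc]
    gcongr
    exact le_sup' (fun s => ‖f s‖ / b s 1) (mem_Icc.mpr ⟨hk1, le_rfl⟩)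

theorem stmt15 {n : ℕ} (M : ℕ) (hM : 1 ≤ M) (γ : ℝ) (hγ0 : 0 < γ) (hγ1 : γ < 1)
    (b : ℕ → ℕ → ℝ)  -- b m k = b_k^{(m,γ)}
    (hb1 : ∀ m, 1 ≤ m → m ≤ M → 0 < b m 1)
    (hbmono : ∀ m, 1 ≤ m → m ≤ M → ∀ k, 1 ≤ k → k < m → b m k ≤ b m (k + 1))
    (B : ℕ → Matrix (Fin n) (Fin n) ℝ)
    (hB : ∀ m, 1 ≤ m → m ≤ M → IsUnit (B m) ∧
      ∀ y : Fin n → ℝ, ‖((B m)⁻¹).mulVec y‖ ≤ (Real.Gamma (1 - γ) / b m 1) * ‖y‖)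
    (u f : ℕ → (Fin n → ℝ))
    (hrec : ∀ m, 1 ≤ m → m ≤ M →
      b m m * ‖u m‖ ≤ (∑ k ∈ Finset.Icc 1 (m - 1), (b m (k + 1) - b m k) * ‖u k‖)
        + b m 1 * (‖u 0‖ + (Real.Gamma (1 - γ) / b m 1) * ‖f m‖)) :
    ∀ k, (hk1 : 1 ≤ k) → k ≤ M →
      ‖u k‖ ≤ ‖u 0‖ + Real.Gamma (1 - γ) *
        ((Finset.Icc 1 k).sup' (Finset.nonempty_Icc.mpr hk1)
          (fun s => ‖f s‖ / b s 1)) :=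
  stmt15_general M γ hγ1 b hb1 hbmono u f hrec
end
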